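/- Let F be a two-dimensional spectral resolution on the k-perfect MV-algebra M = Γ(ℤ ⋉ G,(k,0)). Then for every i with 1 ≤ i ≤ k and T_i nonempty, the set of characteristic points of T_i has at most k − i + 1 elements; consequently, the set of all characteristic points of F has at most k(k+1)/2 elements. -/

import Mathlib

open Function Set

/-- A partially ordered set is Dedekind σ-complete if every monotone increasing
sequence bounded above has a supremum. -/
def DedekindSigmaComplete (G : Type*) [Preorder G] : Prop :=
  ∀ f : ℕ → G, Monotone f → BddAbove (Set.range f) → ∃ g, IsLUB (Set.range f) g

section Lexi

variable {H : Type*} [AddCommGroup H] [LinearOrder H] [IsOrderedAddMonoid H]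
variable {G : Type*} [AddCommGroup G] [Lattice G] [CovariantClass G G (· + ·) (· ≤ ·)]

/-- `u` is a strong unit of `H`. -/
def IsStrongUnit (u : H) : Prop := ∀ h : H, ∃ n : ℕ, 0 < n ∧ h ≤ n • u

/-- The underlying set of the lexicographic MV-algebra `Γ(H ⋉ G, (u,0))`. -/
def MSet (u : H) : Set (H ×ₗ G) := Set.Icc (toLex ((0 : H), (0 : G))) (toLex (u, (0 : G)))

/-- `M_h`: the elements of `M` whose first coordinate is `h`. -/
def MLevel (u h : H) : Set (H ×ₗ G) := {z ∈ MSet (G := G) u | (ofLex z).1 = h}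

/-- A sequence of elements of `M` is summable if all its finite partial sums lie in `M`. -/
def SummableSeq (u : H) (a : ℕ → H ×ₗ G) : Prop := ∀ F : Finset ℕ, ∑ m ∈ F, a m ∈ MSet u

/-- `x` is an `n`-dimensional observable on `Γ(H ⋉ G, (u,0))`. -/
def IsObservable (u : H) (n : ℕ) (x : Set (Fin n → ℝ) → H ×ₗ G) : Prop :=
  (∀ A : Set (Fin n → ℝ), MeasurableSet A → x A ∈ MSet u) ∧
  x Set.univ = toLex (u, (0 : G)) ∧
  ∀ A : ℕ → Set (Fin n → ℝ), (∀ m, MeasurableSet (A m)) → Pairwise (Disjoint on A) →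
    (∀ F : Finset ℕ, ∑ m ∈ F, x (A m) ∈ MSet u) ∧
    IsLUB {y | ∃ F : Finset ℕ, y = ∑ m ∈ F, x (A m)} (x (⋃ m, A m))

/-- The spectral resolution `F_x` of an observable `x`. -/
def specRes {n : ℕ} (x : Set (Fin n → ℝ) → H ×ₗ G) : (Fin n → ℝ) → H ×ₗ G :=
  fun t => x {s | ∀ i, s i < t i}

/-- The increment `V(F,[a,b))`. -/
def boxSum {n : ℕ} (F : (Fin n → ℝ) → H ×ₗ G) (a b : Fin n → ℝ) : H ×ₗ G :=
  ∑ S : Finset (Fin n), ((-1 : ℤ) ^ (n - S.card)) • F (fun i => if i ∈ S then b i else a i)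

/-- `F` is an `n`-dimensional spectral resolution on `Γ(H ⋉ G, (u,0))`. -/
def IsSpectralResolution (u : H) (n : ℕ) (F : (Fin n → ℝ) → H ×ₗ G) : Prop :=
  Monotone F ∧
  IsLUB (Set.range F) (toLex (u, (0 : G))) ∧
  (∀ t : Fin n → ℝ, IsLUB {y | ∃ s : Fin n → ℝ, (∀ i, s i < t i) ∧ y = F s} (F t)) ∧
  (∀ (i : Fin n) (s : Fin n → ℝ),
      IsGLB {y | ∃ r : ℝ, y = F (Function.update s i r)} (toLex ((0 : H), (0 : G)))) ∧
  (∀ a b : Fin n → ℝ, a ≤ b →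
      toLex ((0 : H), (0 : G)) ≤ boxSum F a b ∧ boxSum F a b ≤ toLex (u, (0 : G)))

/-- `T_h = {s ∈ ℝⁿ : F s ∈ M_h}`. -/
def TSet (u : H) {n : ℕ} (F : (Fin n → ℝ) → H ×ₗ G) (h : H) : Set (Fin n → ℝ) :=
  {s | F s ∈ MLevel u h}

/-- The projection `π_j^h(s)`. -/
noncomputable def proj (u : H) {n : ℕ} (F : (Fin n → ℝ) → H ×ₗ G) (h : H)
    (s : Fin n → ℝ) (j : Fin n) : ℝ :=
  sInf {r : ℝ | Function.update s j r ∈ TSet u F h}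

/-- The characteristic point `π_h(s)` associated to `s ∈ T_h`. -/
noncomputable def charPt (u : H) {n : ℕ} (F : (Fin n → ℝ) → H ×ₗ G) (h : H)
    (s : Fin n → ℝ) : Fin n → ℝ :=
  fun j => proj u F h s j

/-- The set of characteristic points of `T_h`. -/
def charPts (u : H) {n : ℕ} (F : (Fin n → ℝ) → H ×ₗ G) (h : H) : Set (Fin n → ℝ) :=
  charPt u F h '' TSet u F h

/-- The set of all characteristic points of `F`. -/
def charPoints (u : H) {n : ℕ} (F : (Fin n → ℝ) → H ×ₗ G) : Set (Fin n → ℝ) :=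
  {p | ∃ h : H, 0 < h ∧ h ≤ u ∧ p ∈ charPts u F h}

/-- A block of some `T_h`, `0 < h ≤ u`. -/
def IsBlock (u : H) {n : ℕ} (F : (Fin n → ℝ) → H ×ₗ G) (C : Set (Fin n → ℝ)) : Prop :=
  ∃ h : H, 0 < h ∧ h ≤ u ∧ ∃ s ∈ TSet u F h,
    C = {t ∈ TSet u F h | charPt u F h t = charPt u F h s}

/-- A `T_0`-adjoined block. -/
def IsT0AdjBlock (u : H) {n : ℕ} (F : (Fin n → ℝ) → H ×ₗ G) (C : Set (Fin n → ℝ)) : Prop :=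
  ∃ h : H, 0 < h ∧ h ≤ u ∧ (∃ s ∈ TSet u F h,
    C = {t ∈ TSet u F h | charPt u F h t = charPt u F h s}) ∧
    ∀ t ∈ C, ∀ j : Fin n, Function.update t j (proj u F h t j) ∈ TSet u F 0

end Lexi

/-
Only the integer part `g x y` of `F ![x, y]` matters. It is monotone, takes the value `0`
somewhere on every horizontal and vertical line, is supermodular (this is the volume condition)
and every value `g t` is already taken strictly south-west of `t` (left continuity). For
`s ∈ T_i`, `π_i(s)` is the pair (lowest point of row `s₁`, lowest point of column `s₀`) of the
level set `{g = i}`. Supermodularity makes a characteristic point determined by its second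
coordinate. It also shows that, at a common height `Y` above them, `g` strictly increases along
columns whose lowest points strictly decrease; since these values lie in `[i, k]`, there are at
most `k - i + 1` lowest points of columns, hence at most `k - i + 1` characteristic points of `T_i`.
-/

theorem Set.finite_of_forall_finset_card_le {α : Type*} {s : Set α} {n : ℕ}
    (h : ∀ t : Finset α, ↑t ⊆ s → t.card ≤ n) : s.Finite := by
  by_contra hs
  obtain ⟨t, hts, ht⟩ := Set.Infinite.exists_subset_card_eq hs (n + 1)
  have := h t hts
  omega

theorem Set.ncard_le_of_forall_finset_card_le {α : Type*} {s : Set α} {n : ℕ}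
    (h : ∀ t : Finset α, ↑t ⊆ s → t.card ≤ n) : s.ncard ≤ n := by
  have hs := Set.finite_of_forall_finset_card_le h
  rw [← hs.coe_toFinset, Set.ncard_coe_finset]
  exact h _ hs.coe_toFinset.subset

/-- What the counting argument uses of `(x, y) ↦ (ofLex (F ![x, y])).1` for a two-dimensional
spectral resolution `F` on `Γ(ℤ ⋉ G, (k, 0))`. -/
structure IsLevelFunction (g : ℝ → ℝ → ℤ) : Prop where
  mono : ∀ ⦃x x' : ℝ⦄, x ≤ x' → ∀ ⦃y y' : ℝ⦄, y ≤ y' → g x y ≤ g x' y'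
  supermodular : ∀ ⦃x x' : ℝ⦄, x ≤ x' → ∀ ⦃y y' : ℝ⦄, y ≤ y' →
    g x y' + g x' y ≤ g x y + g x' y'
  exists_nonpos_right : ∀ x, ∃ y, g x y ≤ 0
  exists_nonpos_left : ∀ y, ∃ x, g x y ≤ 0
  exists_lt_lt_eq : ∀ x y, ∃ x' < x, ∃ y' < y, g x' y' = g x y

noncomputable def levelInf (g : ℝ → ℝ → ℤ) (i : ℤ) (x : ℝ) : ℝ := sInf {y | g x y = i}

namespace IsLevelFunction

variable {g : ℝ → ℝ → ℤ} {i K : ℤ} {x x' y y' b b' : ℝ}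

theorem swap (hg : IsLevelFunction g) : IsLevelFunction (Function.swap g) where
  mono _ _ hx _ _ hy := hg.mono hy hx
  supermodular _ _ hx _ _ hy := (add_comm _ _).trans_le (hg.supermodular hy hx)
  exists_nonpos_right := hg.exists_nonpos_left
  exists_nonpos_left := hg.exists_nonpos_right
  exists_lt_lt_eq x y :=
    let ⟨y', hy, x', hx, h⟩ := hg.exists_lt_lt_eq y x
    ⟨x', hx, y', hy, h⟩

variable (hg : IsLevelFunction g) (hi : 0 < i)
include hg hi

theorem bddBelow_setOf_eq (x : ℝ) : BddBelow {y | g x y = i} := by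
  obtain ⟨y₀, hy₀⟩ := hg.exists_nonpos_right x
  refine ⟨y₀, fun y (hy : g x y = i) => le_of_not_gt fun hlt => ?_⟩
  have := hg.mono (le_refl x) hlt.le
  omega

theorem levelInf_le (h : g x y = i) : levelInf g i x ≤ y :=
  csInf_le (hg.bddBelow_setOf_eq hi x) h

theorem lt_of_lt_levelInf (hb : g x b = i) (hy : y < levelInf g i x) : g x y < i :=
  (hb ▸ hg.mono le_rfl (hy.le.trans (hg.levelInf_le hi hb))).lt_of_ne
    fun h => (hg.levelInf_le hi h).not_gt hy

omit hi in
theorem le_of_levelInf_lt (hb : g x b = i) (hy : levelInf g i x < y) : i ≤ g x y := by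
  obtain ⟨y', hy' : g x y' = i, hlt⟩ := exists_lt_of_csInf_lt ⟨b, hb⟩ hy
  exact hy' ▸ hg.mono le_rfl hlt.le

omit hi in
theorem eq_of_levelInf_lt_of_le (hb : g x b = i) (hy : levelInf g i x < y) (hyb : y ≤ b) :
    g x y = i :=
  le_antisymm (hb ▸ hg.mono le_rfl hyb) (hg.le_of_levelInf_lt hb hy)

theorem levelInf_lt (h : g x y = i) : levelInf g i x < y := by
  obtain ⟨x', hx', y', hy', h'⟩ := hg.exists_lt_lt_eq x y
  have : g x y' = i := le_antisymm (h ▸ hg.mono le_rfl hy'.le) (h ▸ h' ▸ hg.mono hx'.le le_rfl)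
  exact (hg.levelInf_le hi this).trans_lt hy'

theorem levelInf_anti (hx : x ≤ x') (hb : g x b = i) (hb' : g x' b' = i) :
    levelInf g i x' ≤ levelInf g i x := by
  refine le_csInf ⟨b, hb⟩ fun y (hy : g x y = i) => ?_
  rcases le_total y b' with hyb | hby
  · refine hg.levelInf_le hi (le_antisymm (hb' ▸ hg.mono le_rfl hyb) ?_)
    exact hy ▸ hg.mono hx le_rfl
  · exact (hg.levelInf_le hi hb').trans hby

omit hi in
theorem eq_of_other_corners_eq (hx : x ≤ x') (hy : y ≤ y') (h₁ : g x y' = i) (h₂ : g x' y = i)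
    (h₃ : g x' y' = i) : g x y = i := by
  have := hg.supermodular hx hy
  have := hg.mono hx (le_refl y)
  omega

theorem lt_of_levelInf_lt_levelInf {Y : ℝ} (hb : g x b = i) (hb' : g x' b' = i)
    (hlt : levelInf g i x' < levelInf g i x) (hY : levelInf g i x ≤ Y) : g x Y < g x' Y := by
  have hx : x ≤ x' := le_of_not_gt fun h => (hg.levelInf_anti hi h.le hb' hb).not_gt hlt
  obtain ⟨c, hc : g x' c = i, hcx⟩ := exists_lt_of_csInf_lt ⟨b', hb'⟩ hlt
  have := hg.lt_of_lt_levelInf hi hb hcx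
  have := hg.supermodular hx (hcx.le.trans hY)
  omega

theorem card_le_of_subset_levelInf_image (hK : ∀ x y, g x y ≤ K) {t : Finset ℝ}
    (ht : ↑t ⊆ levelInf g i '' {x | ∃ y, g x y = i}) : t.card ≤ (K + 1 - i).toNat := by
  have : ∀ v ∈ t, ∃ x, (∃ y, g x y = i) ∧ levelInf g i x = v := fun v hv => ht hv
  choose! col hcol hcolv using this
  obtain ⟨M, hM⟩ := t.bddAbove
  have hanti : StrictAntiOn (fun v => g (col v) (M + 1)) t := by
    intro v hv w hw hvw
    obtain ⟨b, hb⟩ := hcol v hv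
    obtain ⟨b', hb'⟩ := hcol w hw
    refine hg.lt_of_levelInf_lt_levelInf hi hb' hb ?_ ?_
    · rwa [hcolv v hv, hcolv w hw]
    · rw [hcolv w hw]; linarith [hM hw]
  rw [← Int.card_Icc]
  refine Finset.card_le_card_of_injOn _ (fun v hv => ?_) hanti.injOn
  obtain ⟨b, hb⟩ := hcol v hv
  refine Finset.mem_Icc.2 ⟨hg.le_of_levelInf_lt hb ?_, hK _ _⟩
  rw [hcolv v hv]; linarith [hM hv]

theorem finite_levelInf_image (hK : ∀ x y, g x y ≤ K) :
    (levelInf g i '' {x | ∃ y, g x y = i}).Finite :=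
  Set.finite_of_forall_finset_card_le fun _ => hg.card_le_of_subset_levelInf_image hi hK

theorem ncard_levelInf_image_le (hK : ∀ x y, g x y ≤ K) :
    (levelInf g i '' {x | ∃ y, g x y = i}).ncard ≤ (K + 1 - i).toNat :=
  Set.ncard_le_of_forall_finset_card_le fun _ => hg.card_le_of_subset_levelInf_image hi hK

theorem levelInf_swap_le_of_levelInf_le {w₀ w₁ v₀ v₁ : ℝ} (hw : g w₀ w₁ = i) (hv : g v₀ v₁ = i)
    (h : levelInf g i w₀ ≤ levelInf g i v₀) :
    levelInf (Function.swap g) i v₁ ≤ levelInf (Function.swap g) i w₁ := by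
  by_contra! hlt
  have hv₁w₁ : v₁ ≤ w₁ := le_of_not_gt fun h' => (hg.swap.levelInf_anti hi h'.le hw hv).not_gt hlt
  obtain ⟨x, hx : g x w₁ = i, hxv⟩ := exists_lt_of_csInf_lt ⟨w₀, hw⟩ hlt
  have hw₀v₁ : g w₀ v₁ = i :=
    hg.eq_of_levelInf_lt_of_le hw (h.trans_lt (hg.levelInf_lt hi hv)) hv₁w₁
  have hmin : g (min x w₀) w₁ = i := by rcases min_choice x w₀ with h | h <;> rwa [h]
  have := hg.eq_of_other_corners_eq (min_le_right x w₀) hv₁w₁ hmin hw₀v₁ hw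
  exact (hg.swap.levelInf_le hi this).not_gt ((min_le_left _ _).trans_lt hxv)

theorem levelInf_swap_eq_of_levelInf_eq {w₀ w₁ v₀ v₁ : ℝ} (hw : g w₀ w₁ = i) (hv : g v₀ v₁ = i)
    (h : levelInf g i w₀ = levelInf g i v₀) :
    levelInf (Function.swap g) i w₁ = levelInf (Function.swap g) i v₁ :=
  le_antisymm (hg.levelInf_swap_le_of_levelInf_le hi hv hw h.ge)
    (hg.levelInf_swap_le_of_levelInf_le hi hw hv h.le)

end IsLevelFunction

namespace Prod.Lex

variable {G : Type*} [AddCommGroup G] [PartialOrder G] [CovariantClass G G (· + ·) (· ≤ ·)]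

theorem le_fst_of_isGLB {s : Set (ℤ ×ₗ G)} {a : ℤ ×ₗ G} {n : ℤ} (ha : IsGLB s a)
    (hs : ∀ y ∈ s, n ≤ (ofLex y).1) : n ≤ (ofLex a).1 := by
  obtain ⟨⟨m, c⟩, rfl⟩ := toLex.surjective a
  simp only [ofLex_toLex]
  by_contra! hmn
  -- Then every `toLex (n - 1, x)` is a lower bound, so `c` is a top element of the ordered group
  -- `G`, which forces `G` to be trivial.
  have htop : ∀ x : G, x ≤ c := fun x => by
    have hlb : toLex (n - 1, x) ∈ lowerBounds s := fun y hy =>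
      le_iff.2 (.inl ((sub_one_lt n).trans_le (hs y hy)))
    rcases toLex_le_toLex.1 (ha.2 hlb) with h | h
    · simp only at h; omega
    · exact h.2
  have hlb : toLex (n, c) ∈ lowerBounds s := fun y hy =>
    le_iff.2 ((hs y hy).lt_or_eq.imp id fun h => ⟨h, by simpa using htop (c + (c - (ofLex y).2))⟩)
  rcases toLex_le_toLex.1 (ha.2 hlb) with h | h
  · simp only at h; omega
  · simp only at h; omega

theorem fst_le_of_isLUB {s : Set (ℤ ×ₗ G)} {a : ℤ ×ₗ G} {n : ℤ} (ha : IsLUB s a)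
    (hs : ∀ y ∈ s, (ofLex y).1 ≤ n) : (ofLex a).1 ≤ n := by
  obtain ⟨⟨m, c⟩, rfl⟩ := toLex.surjective a
  simp only [ofLex_toLex]
  by_contra! hnm
  have hbot : ∀ x : G, c ≤ x := fun x => by
    have hub : toLex (n + 1, x) ∈ upperBounds s := fun y hy =>
      le_iff.2 (.inl ((hs y hy).trans_lt (lt_add_one n)))
    rcases toLex_le_toLex.1 (ha.2 hub) with h | h
    · simp only at h; omega
    · exact h.2
  have hub : toLex (n, c) ∈ upperBounds s := fun y hy =>
    le_iff.2 ((hs y hy).lt_or_eq.imp id fun h => ⟨h, by simpa using hbot (c - ((ofLex y).2 - c))⟩)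
  rcases toLex_le_toLex.1 (ha.2 hub) with h | h
  · simp only at h; omega
  · simp only at h; omega

end Prod.Lex

theorem boxSum_two {G : Type*} [AddCommGroup G] (F : (Fin 2 → ℝ) → ℤ ×ₗ G) (x x' y y' : ℝ) :
    boxSum F ![x, y] ![x', y'] = F ![x', y'] + F ![x, y] - F ![x', y] - F ![x, y'] := by
  rw [boxSum, show (Finset.univ : Finset (Finset (Fin 2))) = {∅, {0}, {1}, {0, 1}} by decide,
    Finset.sum_insert (by decide), Finset.sum_insert (by decide), Finset.sum_insert (by decide),
    Finset.sum_singleton]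
  have e : ∀ S : Finset (Fin 2), (fun j => if j ∈ S then ![x', y'] j else ![x, y] j) =
      ![if 0 ∈ S then x' else x, if 1 ∈ S then y' else y] := fun S => by
    funext j; fin_cases j <;> simp
  simp only [e]
  simp [sub_eq_add_neg, add_assoc, add_comm, add_left_comm]

theorem Matrix.vec2_eta {α : Type*} (s : Fin 2 → α) : ![s 0, s 1] = s := by
  funext j; fin_cases j <;> rfl

theorem Matrix.vec2_le_vec2 {α : Type*} [Preorder α] {x x' y y' : α} (hx : x ≤ x')
    (hy : y ≤ y') : ![x, y] ≤ ![x', y'] := by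
  intro j; fin_cases j
  exacts [hx, hy]

def level {G : Type*} (F : (Fin 2 → ℝ) → ℤ ×ₗ G) (x y : ℝ) : ℤ := (ofLex (F ![x, y])).1

namespace IsSpectralResolution

variable {G : Type*} [AddCommGroup G] [Lattice G] {u i : ℤ} {F : (Fin 2 → ℝ) → ℤ ×ₗ G}

theorem toLex_zero_le (hF : IsSpectralResolution u 2 F) (s : Fin 2 → ℝ) : toLex (0, 0) ≤ F s :=
  (hF.2.2.2.1 0 s).1 ⟨s 0, by rw [update_eq_self]⟩

theorem le_toLex (hF : IsSpectralResolution u 2 F) (s : Fin 2 → ℝ) : F s ≤ toLex (u, 0) :=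
  hF.2.1.1 ⟨s, rfl⟩

theorem level_le (hF : IsSpectralResolution u 2 F) (x y : ℝ) : level F x y ≤ u :=
  Prod.Lex.monotone_fst _ _ (hF.le_toLex _)

theorem mem_TSet_iff (hF : IsSpectralResolution u 2 F) {s : Fin 2 → ℝ} :
    s ∈ TSet u F i ↔ level F (s 0) (s 1) = i := by
  rw [level, Matrix.vec2_eta]
  exact ⟨fun h => h.2, fun h => ⟨⟨hF.toLex_zero_le s, hF.le_toLex s⟩, h⟩⟩

theorem charPt_eq (hF : IsSpectralResolution u 2 F) (s : Fin 2 → ℝ) :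
    charPt u F i s = ![levelInf (Function.swap (level F)) i (s 1), levelInf (level F) i (s 0)] := by
  funext j
  fin_cases j <;> simp [charPt, proj, levelInf, hF.mem_TSet_iff, Function.swap]

theorem supermodular_level (hF : IsSpectralResolution u 2 F) {x x' : ℝ} (hx : x ≤ x') {y y' : ℝ}
    (hy : y ≤ y') : level F x y' + level F x' y ≤ level F x y + level F x' y' := by
  have := Prod.Lex.monotone_fst _ _ (hF.2.2.2.2 _ _ (Matrix.vec2_le_vec2 hx hy)).1
  rw [boxSum_two] at this
  change 0 ≤ level F x' y' + level F x y - level F x' y - level F x y' at this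
  omega

theorem image_charPts_subset (hF : IsSpectralResolution u 2 F) :
    (fun p => p 1) '' charPts u F i ⊆ levelInf (level F) i '' {x | ∃ y, level F x y = i} := by
  rintro _ ⟨_, ⟨s, hs, rfl⟩, rfl⟩
  exact ⟨s 0, ⟨s 1, hF.mem_TSet_iff.1 hs⟩, by simp [hF.charPt_eq]⟩

variable [CovariantClass G G (· + ·) (· ≤ ·)]

theorem isLevelFunction_level (hF : IsSpectralResolution u 2 F) : IsLevelFunction (level F) where
  mono _ _ hx _ _ hy := Prod.Lex.monotone_fst _ _ (hF.1 (Matrix.vec2_le_vec2 hx hy))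
  supermodular _ _ hx _ _ hy := hF.supermodular_level hx hy
  exists_nonpos_right x := by
    by_contra! h
    have := Prod.Lex.le_fst_of_isGLB (hF.2.2.2.1 1 ![x, 0]) (n := 1) ?_
    · simp at this
    rintro _ ⟨r, rfl⟩
    have : update ![x, 0] 1 r = ![x, r] := by funext j; fin_cases j <;> simp
    rw [this]
    exact h r
  exists_nonpos_left y := by
    by_contra! h
    have := Prod.Lex.le_fst_of_isGLB (hF.2.2.2.1 0 ![0, y]) (n := 1) ?_
    · simp at this
    rintro _ ⟨r, rfl⟩
    have : update ![0, y] 0 r = ![r, y] := by funext j; fin_cases j <;> simp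
    rw [this]
    exact h r
  exists_lt_lt_eq x y := by
    by_contra! h
    have := Prod.Lex.fst_le_of_isLUB (hF.2.2.1 ![x, y]) (n := level F x y - 1) ?_
    · exact (this : level F x y ≤ level F x y - 1).not_gt (sub_one_lt _)
    rintro _ ⟨s, hs, rfl⟩
    have hle := Prod.Lex.monotone_fst _ _ (hF.1 fun j => (hs j).le)
    have hne := h (s 0) (by simpa using hs 0) (s 1) (by simpa using hs 1)
    rw [level, Matrix.vec2_eta] at hne
    exact Int.le_sub_one_of_lt (hle.lt_of_ne hne)

theorem injOn_charPts (hF : IsSpectralResolution u 2 F) (hi : 0 < i) :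
    InjOn (fun p => p 1) (charPts u F i) := by
  rintro _ ⟨s, hs, rfl⟩ _ ⟨t, ht, rfl⟩ h
  rw [hF.mem_TSet_iff] at hs ht
  simp only [hF.charPt_eq, Matrix.cons_val_one, Matrix.cons_val_fin_one] at h ⊢
  rw [hF.isLevelFunction_level.levelInf_swap_eq_of_levelInf_eq hi hs ht h, h]

theorem finite_charPts (hF : IsSpectralResolution u 2 F) (hi : 0 < i) : (charPts u F i).Finite :=
  Finite.of_finite_image
    ((hF.isLevelFunction_level.finite_levelInf_image hi hF.level_le).subset hF.image_charPts_subset)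
    (hF.injOn_charPts hi)

theorem ncard_charPts_le (hF : IsSpectralResolution u 2 F) (hi : 0 < i) :
    (charPts u F i).ncard ≤ (u + 1 - i).toNat := by
  have hg := hF.isLevelFunction_level
  rw [← (hF.injOn_charPts hi).ncard_image]
  exact (ncard_le_ncard hF.image_charPts_subset (hg.finite_levelInf_image hi hF.level_le)).trans
    (hg.ncard_levelInf_image_le hi hF.level_le)

end IsSpectralResolution

theorem stmt_19_general {G : Type*}
    [AddCommGroup G] [Lattice G] [CovariantClass G G (· + ·) (· ≤ ·)]
    (k : ℕ)
    (F : (Fin 2 → ℝ) → ℤ ×ₗ G) (hF : IsSpectralResolution (k : ℤ) 2 F) :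
    (∀ i : ℕ, 1 ≤ i → i ≤ k → (TSet (k : ℤ) F (i : ℤ)).Nonempty →
      (charPts (k : ℤ) F (i : ℤ)).Finite ∧
      (charPts (k : ℤ) F (i : ℤ)).ncard ≤ k - i + 1) ∧
    (charPoints (k : ℤ) F).Finite ∧ (charPoints (k : ℤ) F).ncard ≤ k * (k + 1) / 2 := by
  have hsub : charPoints (k : ℤ) F ⊆ ⋃ j ∈ Finset.range k, charPts (k : ℤ) F (k - j) := by
    rintro p ⟨h, h0, hk, hp⟩
    refine mem_iUnion₂.2 ⟨(k - h).toNat, Finset.mem_range.2 (by omega), ?_⟩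
    rwa [show (k : ℤ) - ((k - h).toNat : ℕ) = h by omega]
  have hfin : (⋃ j ∈ Finset.range k, charPts (k : ℤ) F (k - j)).Finite :=
    (Finset.range k).finite_toSet.biUnion fun j hj => hF.finite_charPts (by have := Finset.mem_range.1 hj; omega)
  have hgauss : ∑ j ∈ Finset.range k, (j + 1) = k * (k + 1) / 2 := by
    have := Finset.sum_range_succ' (fun j => j) k
    rw [Finset.sum_range_id, add_zero] at this
    rw [← this, Nat.add_sub_cancel, mul_comm]
  refine ⟨fun i hi hik _ => ⟨hF.finite_charPts (by omega),
    (hF.ncard_charPts_le (by omega)).trans (by omega)⟩, hfin.subset hsub, ?_⟩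
  calc (charPoints (k : ℤ) F).ncard
      ≤ (⋃ j ∈ Finset.range k, charPts (k : ℤ) F (k - j)).ncard := ncard_le_ncard hsub hfin
    _ ≤ ∑ j ∈ Finset.range k, (charPts (k : ℤ) F (k - j)).ncard := Finset.set_ncard_biUnion_le _ _
    _ ≤ ∑ j ∈ Finset.range k, (j + 1) := Finset.sum_le_sum fun j hj =>
      (hF.ncard_charPts_le (by have := Finset.mem_range.1 hj; omega)).trans (by omega)
    _ = k * (k + 1) / 2 := hgauss

theorem stmt_19 {G : Type*}
    [AddCommGroup G] [Lattice G] [CovariantClass G G (· + ·) (· ≤ ·)]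
    (hG : DedekindSigmaComplete G) (k : ℕ) (hk : 1 ≤ k)
    (F : (Fin 2 → ℝ) → ℤ ×ₗ G) (hF : IsSpectralResolution (k : ℤ) 2 F) :
    (∀ i : ℕ, 1 ≤ i → i ≤ k → (TSet (k : ℤ) F (i : ℤ)).Nonempty →
      (charPts (k : ℤ) F (i : ℤ)).Finite ∧
      (charPts (k : ℤ) F (i : ℤ)).ncard ≤ k - i + 1) ∧
    (charPoints (k : ℤ) F).Finite ∧ (charPoints (k : ℤ) F).ncard ≤ k * (k + 1) / 2 :=
  stmt_19_general k F hF
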